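/- For every positive integer m and every real number x with 0 ≤ x ≤ 1/e, g(m,x)^m = g(1,x), i.e., (∑_{k=0}^∞ (km+1)^{k-1} x^k/(m^k k!))^m = ∑_{k=0}^∞ (k+1)^{k-1} x^k / k!. -/

import Mathlib

/-!
With the Abel polynomials `Aₖ(c) = c (c + k)^(k-1)` one has
`g(m, x) = F_{1/m}(x)` where `F_c(x) = ∑ Aₖ(c) xᵏ / k!`. Abel's identity
`∑ⱼ C(n, j) Aⱼ(a) (b + n - j)^(n-j) = (a + b + n)ⁿ` says that the `Aₖ` are of binomial type,
`Aₙ(a + b) = ∑ⱼ C(n, j) Aⱼ(a) Aₙ₋ⱼ(b)`, so the Cauchy product gives `F_{a+b} = F_a F_b`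
wherever the series converge absolutely; by Stirling's bound this holds for `|x| ≤ 1/e`, the terms
being `O(k^(-3/2))`. Hence `g(m, x)^m = F_{1/m}(x)^m = F_1(x) = g(1, x)`.

Abel's identity is proved by induction on `n`: differentiating in `b` turns the sum for `n + 1`
into `n + 1` times the sum for `n` at `b + 1`, and at `b = -a - (n + 1)` the sum collapses to
`a` times an `(n + 1)`-st forward difference of the degree-`n` polynomial `(a + ·)ⁿ`.
-/

/-- `g m x = ∑_{k=0}^∞ (km+1)^{k-1} x^k / (m^k k!)`, where the factor `(km+1)^{k-1}` for
`k = 0` is interpreted as `1` (here via `ℕ`-subtraction in the exponent, which gives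
`(0·m+1)^0 = 1`). -/
noncomputable def g (m x : ℝ) : ℝ :=
  ∑' k : ℕ, ((k : ℝ) * m + 1) ^ (k - 1) * x ^ k / (m ^ k * (Nat.factorial k : ℝ))

open Finset Real

noncomputable def abelPoly : ℕ → ℝ → ℝ
  | 0, _ => 1
  | k + 1, c => c * (c + (k + 1 : ℕ)) ^ k

lemma abelPoly_eq_sub (k : ℕ) (c : ℝ) :
    abelPoly k c = (c + k) ^ k - k * (c + k) ^ (k - 1) := by
  cases k with
  | zero => simp [abelPoly]
  | succ k =>
    rw [abelPoly, Nat.add_sub_cancel, pow_succ]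
    push_cast
    ring

lemma abelPoly_mul_pow {j n : ℕ} (h : j ≤ n + 1) (c : ℝ) :
    abelPoly j c * (c + j) ^ (n + 1 - j) = c * (c + j) ^ n := by
  cases j with
  | zero => simp [abelPoly, pow_succ']
  | succ k =>
    rw [abelPoly, mul_assoc, ← pow_add]
    congr 2
    omega

lemma sum_alternating_choose_mul_pow {R : Type*} [CommRing R] {d n : ℕ} (h : d < n) (a : R) :
    ∑ j ∈ range (n + 1), (-1) ^ (n - j) * n.choose j * (a + j) ^ d = 0 := by
  have := congrFun (fwdDiff_iter_pow_eq_zero_of_lt (R := R) h) a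
  rw [fwdDiff_iter_eq_sum_shift] at this
  simpa [zsmul_eq_mul] using this

noncomputable def abelSum (n : ℕ) (a b : ℝ) : ℝ :=
  ∑ j ∈ range (n + 1), n.choose j * abelPoly j a * (b + (n - j : ℕ)) ^ (n - j)

noncomputable def abelSumDeriv (n : ℕ) (a b : ℝ) : ℝ :=
  ∑ j ∈ range (n + 1), n.choose j * abelPoly j a * ((n - j : ℕ) * (b + (n - j : ℕ)) ^ (n - j - 1))

lemma hasDerivAt_abelSum (n : ℕ) (a b : ℝ) :
    HasDerivAt (abelSum n a) (abelSumDeriv n a b) b := by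
  refine HasDerivAt.fun_sum fun j _ => ?_
  simpa using (((hasDerivAt_id b).add_const _).fun_pow (n - j)).const_mul _

lemma abelSumDeriv_succ (n : ℕ) (a b : ℝ) :
    abelSumDeriv (n + 1) a b = (n + 1) * abelSum n a (b + 1) := by
  rw [abelSumDeriv, sum_range_succ, Nat.sub_self, Nat.cast_zero, zero_mul, mul_zero, add_zero,
    abelSum, mul_sum]
  refine sum_congr rfl fun j hj => ?_
  have hjn : j ≤ n := Nat.lt_succ_iff.mp (mem_range.mp hj)
  have hcast : ((n + 1 - j : ℕ) : ℝ) = (n - j : ℕ) + 1 := by rw [Nat.succ_sub hjn, Nat.cast_succ]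
  have hchoose : ((n + 1).choose j : ℝ) * ((n - j : ℕ) + 1) = (n + 1) * n.choose j := by
    rw [← hcast]
    exact_mod_cast (Nat.choose_mul_succ_eq n j).symm.trans (mul_comm _ _)
  rw [show n + 1 - j - 1 = n - j by omega, hcast]
  linear_combination (abelPoly j a * (b + ((n - j : ℕ) + 1)) ^ (n - j)) * hchoose

lemma abelSum_succ_neg_sub (n : ℕ) (a : ℝ) : abelSum (n + 1) a (-a - (n + 1)) = 0 := by
  have hterm : ∀ j ∈ range (n + 2), ((n + 1).choose j : ℝ) * abelPoly j a *
      (-a - (n + 1) + (n + 1 - j : ℕ)) ^ (n + 1 - j)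
        = a * ((-1) ^ (n + 1 - j) * (n + 1).choose j * (a + j) ^ n) := by
    intro j hj
    have hjn : j ≤ n + 1 := Nat.lt_succ_iff.mp (mem_range.mp hj)
    rw [Nat.cast_sub hjn, show -a - (n + 1) + ((n + 1 : ℕ) - j : ℝ) = -1 * (a + j) by
      push_cast; ring, mul_pow]
    linear_combination ((-1) ^ (n + 1 - j) * ((n + 1).choose j : ℝ)) * abelPoly_mul_pow hjn a
  rw [abelSum, sum_congr rfl hterm, ← mul_sum, sum_alternating_choose_mul_pow (by omega),
    mul_zero]

theorem abelSum_eq_pow (n : ℕ) (a b : ℝ) : abelSum n a b = (a + b + n) ^ n := by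
  induction n generalizing b with
  | zero => simp [abelSum, abelPoly]
  | succ n ih =>
    set F : ℝ → ℝ := fun y => abelSum (n + 1) a y - (a + y + (n + 1 : ℕ)) ^ (n + 1)
    have hF : ∀ y, HasDerivAt F 0 y := by
      intro y
      have hpow := (((hasDerivAt_id' y).const_add a).add_const ((n + 1 : ℕ) : ℝ)).fun_pow (n + 1)
      refine ((hasDerivAt_abelSum (n + 1) a y).sub hpow).congr_deriv ?_
      rw [abelSumDeriv_succ, ih]
      push_cast
      ring
    have hconst : F b = F (-a - (n + 1)) :=
      is_const_of_deriv_eq_zero (fun y => (hF y).differentiableAt) (fun y => (hF y).deriv) _ _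
    have hzero : F (-a - (n + 1)) = 0 := by
      simp only [F, abelSum_succ_neg_sub]
      push_cast
      ring
    linarith

theorem abelPoly_add (n : ℕ) (a b : ℝ) :
    abelPoly n (a + b) = ∑ j ∈ range (n + 1), n.choose j * abelPoly j a * abelPoly (n - j) b := by
  cases n with
  | zero => simp [abelPoly]
  | succ n =>
    simp_rw [abelPoly_eq_sub (_ - _) b, mul_sub, sum_sub_distrib]
    rw [← abelSum, ← abelSumDeriv, abelSum_eq_pow, abelSumDeriv_succ, abelSum_eq_pow,
      abelPoly_eq_sub, Nat.add_sub_cancel]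
    push_cast
    ring

lemma summable_one_div_mul_sqrt :
    Summable fun k : ℕ => 1 / (((k : ℝ) + 1) * √((k : ℝ) + 1)) := by
  refine ((summable_nat_add_iff 1).mpr
    (summable_one_div_nat_rpow.mpr (by norm_num : (1 : ℝ) < 3 / 2))).congr fun k => ?_
  rw [Nat.cast_add_one, show (3 / 2 : ℝ) = 1 + 1 / 2 by norm_num, rpow_add (by positivity),
    rpow_one, ← sqrt_eq_rpow]

lemma summable_pow_div_exp_mul_factorial :
    Summable fun k : ℕ => ((k : ℝ) + 1) ^ k / (exp 1 ^ (k + 1) * (k + 1).factorial) := by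
  refine .of_nonneg_of_le (fun k => by positivity) (fun k => ?_)
    (summable_one_div_mul_sqrt.mul_left (√(2 * π))⁻¹)
  have hfac := Stirling.le_factorial_stirling (k + 1)
  push_cast at hfac
  rw [div_pow, sqrt_mul (by positivity), pow_succ _ k] at hfac
  rw [div_le_iff₀ (by positivity)]
  calc ((k : ℝ) + 1) ^ k = (√(2 * π))⁻¹ * (1 / ((k + 1) * √(k + 1))) *
        (√(2 * π) * √(k + 1) * (((k + 1) ^ k * (k + 1)) / exp 1 ^ (k + 1)) * exp 1 ^ (k + 1)) := by
        field_simp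
    _ ≤ (√(2 * π))⁻¹ * (1 / ((k + 1) * √(k + 1))) * ((k + 1).factorial * exp 1 ^ (k + 1)) := by
        gcongr
    _ = _ := by ring

lemma abs_abelPoly_succ_le (k : ℕ) (c : ℝ) :
    |abelPoly (k + 1) c| ≤ |c| * exp |c| * ((k : ℝ) + 1) ^ k := by
  have hexp : (1 + |c| / (k + 1)) ^ (k + 1) ≤ exp |c| := by
    simpa [sub_eq_add_neg, neg_div] using
      one_sub_div_pow_le_exp_neg (n := k + 1) (t := -|c|) (by push_cast; linarith [abs_nonneg c])
  have hle : (|c| + (k + 1)) ^ k ≤ exp |c| * ((k : ℝ) + 1) ^ k :=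
    calc (|c| + (k + 1)) ^ k = (1 + |c| / (k + 1)) ^ k * ((k : ℝ) + 1) ^ k := by
          rw [← mul_pow]; congr 1; field_simp; ring
      _ ≤ (1 + |c| / (k + 1)) ^ (k + 1) * ((k : ℝ) + 1) ^ k := by
          gcongr
          · exact le_add_of_nonneg_right (by positivity)
          · omega
      _ ≤ exp |c| * ((k : ℝ) + 1) ^ k := by gcongr
  have hbase : |c + ((k + 1 : ℕ) : ℝ)| ≤ |c| + (k + 1) :=
    (abs_add_le _ _).trans_eq (by rw [Nat.abs_cast, Nat.cast_succ])
  rw [abelPoly, abs_mul, abs_pow, mul_assoc]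
  exact mul_le_mul_of_nonneg_left ((pow_le_pow_left₀ (abs_nonneg _) hbase k).trans hle)
    (abs_nonneg c)

lemma tsum_mul_tsum_of_add_eq_sum_choose {p : ℕ → ℝ → ℝ} {a b x : ℝ}
    (hp : ∀ n, p n (a + b) = ∑ j ∈ range (n + 1), n.choose j * p j a * p (n - j) b)
    (ha : Summable fun n => ‖p n a * x ^ n / n.factorial‖)
    (hb : Summable fun n => ‖p n b * x ^ n / n.factorial‖) :
    (∑' n, p n a * x ^ n / n.factorial) * (∑' n, p n b * x ^ n / n.factorial)
      = ∑' n, p n (a + b) * x ^ n / n.factorial := by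
  rw [tsum_mul_tsum_eq_tsum_sum_range_of_summable_norm ha hb]
  refine tsum_congr fun n => ?_
  rw [hp, sum_mul, sum_div]
  refine sum_congr rfl fun j hj => ?_
  have hjn : j ≤ n := Nat.lt_succ_iff.mp (mem_range.mp hj)
  rw [Nat.cast_choose ℝ hjn, ← Nat.add_sub_of_le hjn, Nat.add_sub_cancel_left, pow_add]
  field_simp

noncomputable def abelEGF (c x : ℝ) : ℝ := ∑' k, abelPoly k c * x ^ k / k.factorial

lemma summable_norm_abelEGF (c : ℝ) {x : ℝ} (hx : |x| ≤ (exp 1)⁻¹) :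
    Summable fun k => ‖abelPoly k c * x ^ k / k.factorial‖ := by
  rw [← summable_nat_add_iff 1]
  refine .of_nonneg_of_le (fun k => norm_nonneg _) (fun k => ?_)
    (summable_pow_div_exp_mul_factorial.mul_left (|c| * exp |c|))
  rw [Real.norm_eq_abs, abs_div, abs_mul, abs_pow, Nat.abs_cast]
  calc |abelPoly (k + 1) c| * |x| ^ (k + 1) / (k + 1).factorial
      ≤ (|c| * exp |c| * ((k : ℝ) + 1) ^ k) * (exp 1)⁻¹ ^ (k + 1) / (k + 1).factorial := by
        gcongr
        exact abs_abelPoly_succ_le k c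
    _ = _ := by rw [inv_pow]; field_simp

lemma abelEGF_add (a b : ℝ) {x : ℝ} (hx : |x| ≤ (exp 1)⁻¹) :
    abelEGF (a + b) x = abelEGF a x * abelEGF b x :=
  (tsum_mul_tsum_of_add_eq_sum_choose (fun n => abelPoly_add n a b)
    (summable_norm_abelEGF a hx) (summable_norm_abelEGF b hx)).symm

lemma abelEGF_zero (x : ℝ) : abelEGF 0 x = 1 := by
  rw [abelEGF, tsum_eq_single 0 fun k hk => ?_]
  · simp [abelPoly]
  · obtain ⟨k, rfl⟩ := Nat.exists_eq_succ_of_ne_zero hk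
    simp [abelPoly]

lemma abelEGF_natCast_mul (n : ℕ) (c : ℝ) {x : ℝ} (hx : |x| ≤ (exp 1)⁻¹) :
    abelEGF (n * c) x = abelEGF c x ^ n := by
  induction n with
  | zero => simp [abelEGF_zero]
  | succ n ih => rw [Nat.cast_succ, add_one_mul, abelEGF_add _ _ hx, ih, pow_succ]

lemma g_eq_abelEGF {m : ℝ} (hm : m ≠ 0) (x : ℝ) : g m x = abelEGF m⁻¹ x := by
  refine tsum_congr fun k => ?_
  cases k with
  | zero => simp [abelPoly]
  | succ k =>
    have hbase : m⁻¹ + ((k + 1 : ℕ) : ℝ) = ((k + 1 : ℕ) * m + 1) / m := by field_simp; ring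
    rw [abelPoly, Nat.add_sub_cancel, hbase, div_pow]
    field_simp
    ring

theorem g_pow_eq (m : ℕ) (hm : 0 < m) (x : ℝ) (hx0 : 0 ≤ x) (hx1 : x ≤ 1 / Real.exp 1) :
    g (m : ℝ) x ^ m = g 1 x := by
  have hm' : (m : ℝ) ≠ 0 := Nat.cast_ne_zero.mpr hm.ne'
  have hx : |x| ≤ (exp 1)⁻¹ := by rwa [abs_of_nonneg hx0, ← one_div]
  rw [g_eq_abelEGF hm', g_eq_abelEGF one_ne_zero, ← abelEGF_natCast_mul _ _ hx,
    mul_inv_cancel₀ hm', inv_one]
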